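/- Let m > 1 be an integer. The map h/k ↦ (2h−k)/h is an order-preserving bijection from F^{≥1/2}(B(2m),m) onto the Farey sequence F_m, and the map h/k ↦ k/(2k−h) is its inverse, an order-preserving bijection from F_m onto F^{≥1/2}(B(2m),m). (Here h/k denotes a fraction in lowest terms.) -/

import Mathlib

/-- The Farey sequence `F_n` of order `n`, viewed as the set of rationals `q`
with `0 ≤ q ≤ 1` whose lowest-terms denominator is at most `n`. -/
def Farey (n : ℕ) : Set ℚ :=
  {q : ℚ | 0 ≤ q ∧ q ≤ 1 ∧ q.den ≤ n}

/-- The Farey subsequence `F(B(n),m)`: fractions `h/k ∈ F_n` in lowest terms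
with `h ≤ m` and `k - h ≤ n - m`. -/
def FareyB (n m : ℕ) : Set ℚ :=
  {q : ℚ | 0 ≤ q ∧ q ≤ 1 ∧ q.den ≤ n ∧ q.num ≤ (m : ℤ) ∧
    (q.den : ℤ) - q.num ≤ (n : ℤ) - (m : ℤ)}

/-- `f'` is the predecessor of `f` in the set `S` of rationals. -/
def IsPredIn (S : Set ℚ) (f' f : ℚ) : Prop :=
  f' ∈ S ∧ f ∈ S ∧ f' < f ∧ ∀ g ∈ S, ¬(f' < g ∧ g < f)

/-- `f'` is the successor of `f` in the set `S` of rationals. -/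
def IsSuccIn (S : Set ℚ) (f f' : ℚ) : Prop :=
  f ∈ S ∧ f' ∈ S ∧ f < f' ∧ ∀ g ∈ S, ¬(f < g ∧ g < f')

/-- The right halfsequence `F^{≥1/2}(B(2m),m)`. -/
def FareyBRight (m : ℕ) : Set ℚ := {q ∈ FareyB (2 * m) m | 1 / 2 ≤ q}

/-- On a fraction `q = h/k` in lowest terms, the map `h/k ↦ (2h-k)/h`. -/
def phi (q : ℚ) : ℚ := (2 * (q.num : ℚ) - (q.den : ℚ)) / (q.num : ℚ)

/-- On a fraction `q = h/k` in lowest terms, the map `h/k ↦ k/(2k-h)`. -/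
def psi (q : ℚ) : ℚ := (q.den : ℚ) / (2 * (q.den : ℚ) - (q.num : ℚ))

/-!
As maps of rationals, `phi q = 2 - q⁻¹` (for `q ≠ 0`) and `psi q = (2 - q)⁻¹` are mutually
inverse Möbius transformations, increasing on `(0, ∞)` and on `(-∞, 2)` respectively.
Writing `q = h/k` in lowest terms, `gcd(2h - k, h) = gcd(k, 2k - h) = gcd(h, k) = 1`, so the
fractions `(2h-k)/h` and `k/(2k-h)` are already reduced and the defining bounds of `F_m` and of
`F^{≥1/2}(B(2m),m)` translate into each other: `h ≤ m` becomes `den ≤ m`, and `k ≤ m` becomes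
`num ≤ m` and `(2k - h) - k ≤ m`.
-/

namespace Rat

theorem num_div_eq_of_isCoprime {a b : ℤ} (hb : 0 < b) (hab : IsCoprime a b) :
    ((a : ℚ) / b).num = a :=
  num_div_eq_of_coprime hb (Int.isCoprime_iff_gcd_eq_one.mp hab)

theorem den_div_eq_of_isCoprime {a b : ℤ} (hb : 0 < b) (hab : IsCoprime a b) :
    (((a : ℚ) / b).den : ℤ) = b :=
  den_div_eq_of_coprime hb (Int.isCoprime_iff_gcd_eq_one.mp hab)

theorem le_one_iff_num_le_den (q : ℚ) : q ≤ 1 ↔ q.num ≤ q.den := by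
  simp [Rat.le_iff]

theorem half_le_iff_den_le_two_mul_num (q : ℚ) : 1 / 2 ≤ q ↔ (q.den : ℤ) ≤ 2 * q.num := by
  rw [Rat.le_iff]
  norm_num
  omega

end Rat

theorem mem_farey_iff {n : ℕ} {q : ℚ} :
    q ∈ Farey n ↔ 0 ≤ q.num ∧ q.num ≤ q.den ∧ (q.den : ℤ) ≤ n := by
  simp only [Farey, Set.mem_ofPred_eq, Rat.num_nonneg, Rat.le_one_iff_num_le_den, Nat.cast_le]

theorem mem_fareyBRight_iff {m : ℕ} {q : ℚ} :
    q ∈ FareyBRight m ↔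
      (q.den : ℤ) ≤ 2 * q.num ∧ q.num ≤ q.den ∧ q.num ≤ m ∧ (q.den : ℤ) - q.num ≤ m := by
  simp only [FareyBRight, FareyB, Set.mem_ofPred_eq, ← Rat.num_nonneg,
    Rat.le_one_iff_num_le_den, Rat.half_le_iff_den_le_two_mul_num, ← Int.ofNat_le]
  push_cast
  omega

theorem phi_eq_two_sub_inv {q : ℚ} (hq : q ≠ 0) : phi q = 2 - q⁻¹ := by
  have hnum : (q.num : ℚ) ≠ 0 := by exact_mod_cast Rat.num_ne_zero.mpr hq
  conv_rhs => rw [← Rat.num_div_den q]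
  rw [phi, inv_div]
  field_simp

theorem psi_eq_inv_two_sub (q : ℚ) : psi q = (2 - q)⁻¹ := by
  have hden : (q.den : ℚ) ≠ 0 := by positivity
  conv_rhs => rw [← Rat.num_div_den q]
  rw [psi, ← inv_div, sub_div' hden]

theorem num_phi_and_den_phi {q : ℚ} (hq : 0 < q) :
    (phi q).num = 2 * q.num - q.den ∧ ((phi q).den : ℤ) = q.num := by
  have hcop : IsCoprime (2 * q.num - q.den) q.num := by
    have h := q.isCoprime_num_den.symm.neg_left.mul_add_left_left 2
    rwa [show q.num * 2 + -(q.den : ℤ) = 2 * q.num - q.den by ring] at h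
  have hphi : phi q = ((2 * q.num - q.den : ℤ) : ℚ) / (q.num : ℚ) := by
    push_cast
    rfl
  rw [hphi]
  exact ⟨Rat.num_div_eq_of_isCoprime (Rat.num_pos.mpr hq) hcop,
    Rat.den_div_eq_of_isCoprime (Rat.num_pos.mpr hq) hcop⟩

theorem num_psi_and_den_psi {q : ℚ} (hq : q < 2) :
    (psi q).num = q.den ∧ ((psi q).den : ℤ) = 2 * q.den - q.num := by
  have hpos : 0 < 2 * (q.den : ℤ) - q.num := by
    have := (Rat.lt_iff _ _).mp hq
    norm_num at this
    omega
  have hcop : IsCoprime (q.den : ℤ) (2 * q.den - q.num) := by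
    have h := q.isCoprime_num_den.symm.neg_right.add_mul_left_right 2
    rwa [show -q.num + q.den * 2 = 2 * (q.den : ℤ) - q.num by ring] at h
  have hpsi : psi q = ((q.den : ℤ) : ℚ) / ((2 * q.den - q.num : ℤ) : ℚ) := by
    push_cast
    rfl
  rw [hpsi]
  exact ⟨Rat.num_div_eq_of_isCoprime hpos hcop, Rat.den_div_eq_of_isCoprime hpos hcop⟩

theorem phi_mapsTo (m : ℕ) : Set.MapsTo phi (FareyBRight m) (Farey m) := by
  intro q hq
  rw [mem_fareyBRight_iff] at hq
  have hpos : 0 < q := Rat.num_pos.mp (by have := q.den_pos; omega)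
  obtain ⟨hnum, hden⟩ := num_phi_and_den_phi hpos
  rw [mem_farey_iff, hnum, hden]
  omega

theorem psi_mapsTo (m : ℕ) : Set.MapsTo psi (Farey m) (FareyBRight m) := by
  intro q hq
  rw [mem_farey_iff] at hq
  have hlt : q < 2 := (Rat.le_one_iff_num_le_den q |>.mpr hq.2.1).trans_lt one_lt_two
  obtain ⟨hnum, hden⟩ := num_psi_and_den_psi hlt
  rw [mem_fareyBRight_iff, hnum, hden]
  omega

theorem psi_phi {q : ℚ} (hq : q ≠ 0) : psi (phi q) = q := by
  rw [psi_eq_inv_two_sub, phi_eq_two_sub_inv hq, sub_sub_cancel, inv_inv]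

theorem phi_psi {q : ℚ} (hq : q ≠ 2) : phi (psi q) = q := by
  have hpsi : psi q ≠ 0 := by
    rw [psi_eq_inv_two_sub]
    exact inv_ne_zero (sub_ne_zero.mpr hq.symm)
  rw [phi_eq_two_sub_inv hpsi, psi_eq_inv_two_sub, inv_inv, sub_sub_cancel]

theorem strictMonoOn_phi : StrictMonoOn phi (Set.Ioi 0) := by
  intro a ha b hb hab
  rw [phi_eq_two_sub_inv (ne_of_gt ha), phi_eq_two_sub_inv (ne_of_gt hb)]
  exact sub_lt_sub_left ((inv_lt_inv₀ hb ha).mpr hab) 2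

theorem strictMonoOn_psi : StrictMonoOn psi (Set.Iio 2) := by
  intro a ha b hb hab
  rw [psi_eq_inv_two_sub, psi_eq_inv_two_sub]
  exact (inv_lt_inv₀ (sub_pos.mpr ha) (sub_pos.mpr hb)).mpr (sub_lt_sub_left hab 2)

theorem fareyBRight_subset_Ioi_zero (m : ℕ) : FareyBRight m ⊆ Set.Ioi 0 :=
  fun _ hq => one_half_pos.trans_le hq.2

theorem farey_subset_Iio_two (n : ℕ) : Farey n ⊆ Set.Iio 2 :=
  fun _ hq => hq.2.1.trans_lt one_lt_two

theorem stmt_3_general (m : ℕ) :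
    (∀ q ∈ FareyBRight m, phi q ∈ Farey m) ∧
    (∀ q ∈ Farey m, psi q ∈ FareyBRight m) ∧
    (∀ q ∈ FareyBRight m, psi (phi q) = q) ∧
    (∀ q ∈ Farey m, phi (psi q) = q) ∧
    (∀ q ∈ FareyBRight m, ∀ q' ∈ FareyBRight m, q < q' → phi q < phi q') ∧
    (∀ q ∈ Farey m, ∀ q' ∈ Farey m, q < q' → psi q < psi q') := by
  have hpos := fareyBRight_subset_Ioi_zero m
  have hlt := farey_subset_Iio_two m
  exact ⟨phi_mapsTo m, psi_mapsTo m,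
    fun q hq => psi_phi (Set.mem_Ioi.mp (hpos hq)).ne',
    fun q hq => phi_psi (Set.mem_Iio.mp (hlt hq)).ne,
    fun _ hq _ hq' => strictMonoOn_phi.mono hpos hq hq',
    fun _ hq _ hq' => strictMonoOn_psi.mono hlt hq hq'⟩

/-- For `m > 1`, the map `h/k ↦ (2h-k)/h` is an order-preserving bijection from
`F^{≥1/2}(B(2m),m)` onto `F_m`, with order-preserving inverse `h/k ↦ k/(2k-h)`. -/
theorem stmt_3 (m : ℕ) (hm : 1 < m) :
    (∀ q ∈ FareyBRight m, phi q ∈ Farey m) ∧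
    (∀ q ∈ Farey m, psi q ∈ FareyBRight m) ∧
    (∀ q ∈ FareyBRight m, psi (phi q) = q) ∧
    (∀ q ∈ Farey m, phi (psi q) = q) ∧
    (∀ q ∈ FareyBRight m, ∀ q' ∈ FareyBRight m, q < q' → phi q < phi q') ∧
    (∀ q ∈ Farey m, ∀ q' ∈ Farey m, q < q' → psi q < psi q') :=
  stmt_3_general m
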